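/- Let (f, k, u₀) satisfy Assumption (A) and let (u_j^n) be generated by the upwind-type finite volume scheme with ghost-cell Rankine–Hugoniot coupling, under the CFL condition λ max_i sup_u (f^{(i)})'(u) ≤ 1. Then for every i = 0, …, N, every j with P_i ≤ j ≤ P_{i+1} − 1, and every time index n, the discrete values satisfy the interface maximum principle u_j^n ≤ max_{m = 0, …, i} sup_{l = P_m, …, P_{m+1} − 1} (f^{(i)})^{-1}(f^{(m)}(u_l^0)). -/

import Mathlib

open MeasureTheory
open scoped ENNReal NNReal

/-- The index of the constancy interval of a piecewise constant function with jump points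
`ξ 0 < ξ 1 < ⋯ < ξ (N-1)` containing the point `x`. -/
noncomputable def stepIndex {N : ℕ} (ξ : Fin N → ℝ) (x : ℝ) : Fin (N + 1) :=
  ⟨(Finset.univ.filter fun i => ξ i < x).card,
    Nat.lt_succ_of_le (le_trans (Finset.card_filter_le _ _) (by simp))⟩

/-- `k : ℝ → ℝ` is piecewise constant with finitely many discontinuities. -/
def PiecewiseConst (k : ℝ → ℝ) : Prop :=
  ∃ (N : ℕ) (ξ : Fin N → ℝ) (c : Fin (N + 1) → ℝ),
    StrictMono ξ ∧ ∀ x : ℝ, k x = c (stepIndex ξ x)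

/-- **Assumption (A)**: the flux `f ∈ C²(ℝ²; ℝ)` satisfies `∂_u f(a, u) ≥ α > 0` and
`f(a, 0) = 0` for all `a`; the coefficient `k` is piecewise constant with finitely many
discontinuities; the initial datum `u₀ ∈ (L^∞ ∩ BV)(ℝ)`. -/
structure AssumptionA (α : ℝ) (f : ℝ → ℝ → ℝ) (k u₀ : ℝ → ℝ) : Prop where
  alpha_pos : 0 < α
  f_smooth : ContDiff ℝ 2 (Function.uncurry f)
  f_mono : ∀ a u : ℝ, α ≤ deriv (f a) u
  f_zero : ∀ a : ℝ, f a 0 = 0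
  k_pc : PiecewiseConst k
  u₀_bdd : ∃ B : ℝ, ∀ x, |u₀ x| ≤ B
  u₀_bv : BoundedVariationOn u₀ Set.univ

/-- Adapted (Kružkov-type) entropy solution `u = u(x,t)` on the time interval `[0,T]` of
`u_t + f(k(x),u)_x = 0`, `u(·,0) = u₀`: `u ∈ C([0,T]; L¹(ℝ)) ∩ L^∞`, and for every `p ∈ ℝ`
with adapted constant `c_p` (characterized by `f(k(x), c_p(x)) = p`) and every nonnegative
test function `φ ∈ C_c^∞(ℝ × [0,T])` the adapted entropy inequality holds. -/
structure IsEntropySolution (T : ℝ) (f : ℝ → ℝ → ℝ) (k u₀ : ℝ → ℝ)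
    (u : ℝ → ℝ → ℝ) : Prop where
  bounded : ∃ B : ℝ, ∀ x t, |u x t| ≤ B
  integrable : ∀ t ∈ Set.Icc (0 : ℝ) T, Integrable (fun x => u x t)
  l1_continuous : ∀ t ∈ Set.Icc (0 : ℝ) T,
    Filter.Tendsto (fun s => ∫ x, |u x s - u x t|)
      (nhdsWithin t (Set.Icc (0 : ℝ) T)) (nhds 0)
  entropy : ∀ (p : ℝ) (c : ℝ → ℝ), (∀ x, f (k x) (c x) = p) →
    ∀ φ : ℝ → ℝ → ℝ, ContDiff ℝ (⊤ : ℕ∞) (Function.uncurry φ) →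
      HasCompactSupport (Function.uncurry φ) → (∀ x t, 0 ≤ φ x t) →
      0 ≤ (∫ t in Set.Ioc (0 : ℝ) T, ∫ x,
              (|u x t - c x| * deriv (φ x) t
                + Real.sign (u x t - c x) * (f (k x) (u x t) - f (k x) (c x))
                  * deriv (fun y => φ y t) x))
            - (∫ x, |u x T - c x| * φ x T) + ∫ x, |u₀ x - c x| * φ x 0


/-- The index of the region (constancy interval of `k`) containing the grid cell
`C_j = (j·Δx, (j+1)·Δx)`, for interface positions `P : Fin N → ℤ` (the cell interface
`x_{P_i − 1/2} = P_i · Δx` carries the `i`-th discontinuity of `k`). -/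
noncomputable def cellIndex {N : ℕ} (P : Fin N → ℤ) (j : ℤ) : Fin (N + 1) :=
  ⟨(Finset.univ.filter fun i => P i ≤ j).card,
    Nat.lt_succ_of_le (le_trans (Finset.card_filter_le _ _) (by simp))⟩

/-- The upwind-type finite volume scheme with ghost-cell Rankine–Hugoniot coupling on a
uniform grid of size `Δx` (cells `C_j = (j·Δx, (j+1)·Δx)`) aligned with the discontinuities
`ξ i = P i · Δx` of the coefficient, with time step `Δt` and `λ = Δt/Δx`:
`u_j^0 = (1/Δx) ∫_{C_j} u₀`;
`u_j^{n+1} = u_j^n − λ (f^{(i)}(u_j^n) − f^{(i)}(u_{j−1}^n))` for `P_i < j < P_{i+1}`;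
and the ghost-cell update `f^{(i)}(u_{P_i}^{n+1}) = f^{(i−1)}(u_{P_i−1}^{n+1})`, i.e.
`u_{P_i}^{n+1} = (f^{(i)})^{-1}(f^{(i−1)}(u_{P_i − 1}^{n+1}))`, where `f^{(i)} = f(kv i, ·)`
is the flux in the `i`-th region. -/
structure IsFVMScheme {N : ℕ} (f : ℝ → ℝ → ℝ) (kv : Fin (N + 1) → ℝ)
    (ξ : Fin N → ℝ) (u₀ : ℝ → ℝ) (Δx Δt : ℝ) (P : Fin N → ℤ) (v : ℕ → ℤ → ℝ) : Prop where
  dx_pos : 0 < Δx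
  dt_pos : 0 < Δt
  align : ∀ i : Fin N, ξ i = (P i : ℝ) * Δx
  init : ∀ j : ℤ, v 0 j = Δx⁻¹ * ∫ x in Set.Ioo ((j : ℝ) * Δx) (((j : ℝ) + 1) * Δx), u₀ x
  interior : ∀ (n : ℕ) (j : ℤ), (∀ i : Fin N, j ≠ P i) →
    v (n + 1) j = v n j - (Δt / Δx) *
      (f (kv (cellIndex P j)) (v n j) - f (kv (cellIndex P j)) (v n (j - 1)))
  interface : ∀ (n : ℕ) (i : Fin N),
    f (kv i.succ) (v (n + 1) (P i)) = f (kv i.castSucc) (v (n + 1) (P i - 1))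

/-- The CFL condition `λ · max_i sup_u (f^{(i)})'(u) ≤ 1`, `λ = Δt/Δx`. -/
def CFLCondition {N : ℕ} (f : ℝ → ℝ → ℝ) (kv : Fin (N + 1) → ℝ) (Δx Δt : ℝ) : Prop :=
  ∀ (i : Fin (N + 1)) (w : ℝ), (Δt / Δx) * deriv (f (kv i)) w ≤ 1

/-- The piecewise constant finite volume approximation
`u_Δx(x,t) = u_j^n` for `(x,t) ∈ C_j × [t^n, t^{n+1})`. -/
noncomputable def fvApprox (Δx Δt : ℝ) (v : ℕ → ℤ → ℝ) (x t : ℝ) : ℝ :=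
  v ⌊t / Δt⌋₊ ⌊x / Δx⌋

section Helpers

variable {α : ℝ} {f : ℝ → ℝ → ℝ}

/-- Each partial flux `f a` is differentiable. -/
lemma flux_diff (hf : ContDiff ℝ 2 (Function.uncurry f)) (a : ℝ) :
    Differentiable ℝ (f a) := by
  have h : ContDiff ℝ 2 (f a) := hf.comp (contDiff_const.prodMk contDiff_id)
  exact h.differentiable (by norm_num)

/-- Each partial flux is strictly monotone. -/
lemma flux_strictMono (hα : 0 < α) (hmono : ∀ a u : ℝ, α ≤ deriv (f a) u) (a : ℝ) :
    StrictMono (f a) :=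
  strictMono_of_deriv_pos fun x => lt_of_lt_of_le hα (hmono a x)

/-- Linear growth from below. -/
lemma flux_lin_growth (hf : ContDiff ℝ 2 (Function.uncurry f))
    (hmono : ∀ a u : ℝ, α ≤ deriv (f a) u) (a : ℝ) {x y : ℝ} (hxy : x ≤ y) :
    α * (y - x) ≤ f a y - f a x := by
  have hdiff := flux_diff hf a
  have hd : ∀ z : ℝ, HasDerivAt (fun w => f a w - α * w) (deriv (f a) z - α) z := by
    intro z
    have h1 : HasDerivAt (fun w : ℝ => α * w) α z := by
      simpa using (hasDerivAt_id z).const_mul α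
    exact ((hdiff z).hasDerivAt).sub h1
  have hm : Monotone (fun w => f a w - α * w) := by
    apply monotone_of_deriv_nonneg
    · exact hdiff.sub (differentiable_id.const_mul α)
    · intro z
      rw [(hd z).deriv]
      linarith [hmono a z]
  have := hm hxy
  simp only at this
  nlinarith

/-- Each partial flux is surjective. -/
lemma flux_surj (hα : 0 < α) (hf : ContDiff ℝ 2 (Function.uncurry f))
    (hmono : ∀ a u : ℝ, α ≤ deriv (f a) u) (a : ℝ) :
    Function.Surjective (f a) := by
  apply (flux_diff hf a).continuous.surjective
  · refine Filter.tendsto_atTop_mono' Filter.atTop ?_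
      (Filter.tendsto_atTop_add_const_left _ (f a 0)
        (Filter.tendsto_id.const_mul_atTop hα))
    filter_upwards [Filter.eventually_ge_atTop (0 : ℝ)] with x hx
    have := flux_lin_growth hf hmono a hx
    simp only [id]
    nlinarith
  · refine Filter.tendsto_atBot_mono' Filter.atBot ?_
      (Filter.tendsto_atBot_add_const_left _ (f a 0)
        (Filter.tendsto_id.const_mul_atBot hα))
    filter_upwards [Filter.eventually_le_atBot (0 : ℝ)] with x hx
    have := flux_lin_growth hf hmono a hx
    simp only [id]
    nlinarith

end Helpers


section CellIndexLemmas

lemma cellIndex_interface {N : ℕ} (P : Fin N → ℤ) (hP : StrictMono P) (i₀ : Fin N) :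
    cellIndex P (P i₀) = i₀.succ := by
  rw [Fin.ext_iff]
  show (Finset.univ.filter fun i' => P i' ≤ P i₀).card = (i₀ : ℕ) + 1
  have h : (Finset.univ.filter fun i' => P i' ≤ P i₀) = Finset.Iic i₀ := by
    ext x; simp [hP.le_iff_le]
  rw [h, Fin.card_Iic]

lemma cellIndex_interface_pred {N : ℕ} (P : Fin N → ℤ) (hP : StrictMono P) (i₀ : Fin N) :
    cellIndex P (P i₀ - 1) = i₀.castSucc := by
  rw [Fin.ext_iff]
  show (Finset.univ.filter fun i' => P i' ≤ P i₀ - 1).card = (i₀ : ℕ)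
  have h : (Finset.univ.filter fun i' => P i' ≤ P i₀ - 1) = Finset.Iio i₀ := by
    ext x
    simp only [Finset.mem_filter, Finset.mem_univ, true_and, Finset.mem_Iio]
    rw [Int.le_sub_one_iff, hP.lt_iff_lt]
  rw [h, Fin.card_Iio]

lemma cellIndex_sub_one {N : ℕ} (P : Fin N → ℤ) (j : ℤ) (h : ∀ i', P i' ≠ j) :
    cellIndex P (j - 1) = cellIndex P j := by
  rw [Fin.ext_iff]
  show (Finset.univ.filter fun i' => P i' ≤ j - 1).card
      = (Finset.univ.filter fun i' => P i' ≤ j).card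
  congr 1
  ext x
  simp only [Finset.mem_filter, Finset.mem_univ, true_and]
  have := h x
  omega

end CellIndexLemmas


/-- **Discrete interface maximum principle for the finite volume scheme.**
Let `(f, k, u₀)` satisfy Assumption (A) and let `(u_j^n)` be generated by the upwind-type
finite volume scheme with ghost-cell Rankine–Hugoniot coupling, under the CFL condition.
Then for every region `i`, every cell `j` lying in region `i` (i.e. `P_i ≤ j ≤ P_{i+1} − 1`),
and every time index `n`, the discrete values satisfy
`u_j^n ≤ max_{m ≤ i} sup_{l ∈ region m} (f^{(i)})^{-1}(f^{(m)}(u_l^0))`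
(formulated equivalently: `u_j^n ≤ B` for every upper bound `B` of the right-hand side
family). -/
theorem fvm_discrete_maximum_principle
    (α : ℝ)
    (N : ℕ) (ξ : Fin N → ℝ) (kv : Fin (N + 1) → ℝ) (hξ : StrictMono ξ)
    (f : ℝ → ℝ → ℝ) (k u₀ : ℝ → ℝ) (hk : ∀ x, k x = kv (stepIndex ξ x))
    (hA : AssumptionA α f k u₀)
    (Δx Δt : ℝ) (P : Fin N → ℤ) (v : ℕ → ℤ → ℝ)
    (hscheme : IsFVMScheme f kv ξ u₀ Δx Δt P v)
    (hCFL : CFLCondition f kv Δx Δt) :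
    ∀ (i : Fin (N + 1)) (j : ℤ), cellIndex P j = i → ∀ (n : ℕ) (B : ℝ),
      (∀ m : Fin (N + 1), m ≤ i → ∀ l : ℤ, cellIndex P l = m →
        Function.invFun (f (kv i)) (f (kv m) (v 0 l)) ≤ B) →
      v n j ≤ B := by
  have hα := hA.alpha_pos
  have hfs := hA.f_smooth
  have hfm := hA.f_mono
  have hdx := hscheme.dx_pos
  have hdt := hscheme.dt_pos
  have hlam0 : 0 ≤ Δt / Δx := le_of_lt (div_pos hdt hdx)
  have hsm : ∀ a, StrictMono (f a) := flux_strictMono hα hfm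
  have hsurj : ∀ a, Function.Surjective (f a) := flux_surj hα hfs hfm
  have hright : ∀ a y, f a (Function.invFun (f a) y) = y := fun a y =>
    Function.invFun_eq (hsurj a y)
  have hleftinv : ∀ a x, Function.invFun (f a) (f a x) = x := fun a x =>
    Function.leftInverse_invFun (hsm a).injective x
  have hP : StrictMono P := by
    intro a b hab
    have h := hξ hab
    rw [hscheme.align a, hscheme.align b] at h
    have h2 := (mul_lt_mul_iff_of_pos_right hdx).mp h
    exact_mod_cast h2
  have hGm : ∀ (i : Fin (N + 1)), Monotone (fun x => x - (Δt / Δx) * f (kv i) x) := by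
    intro i
    apply monotone_of_deriv_nonneg
    · exact differentiable_id.sub ((flux_diff hfs (kv i)).const_mul (Δt / Δx))
    · intro x
      have hd : HasDerivAt (fun x => x - (Δt / Δx) * f (kv i) x)
          (1 - (Δt / Δx) * deriv (f (kv i)) x) x :=
        (hasDerivAt_id x).sub (((flux_diff hfs (kv i) x).hasDerivAt).const_mul (Δt / Δx))
      rw [hd.deriv]
      have := hCFL i x
      linarith
  suffices key : ∀ (n : ℕ) (i : Fin (N + 1)) (j : ℤ), cellIndex P j = i → ∀ B : ℝ,
      (∀ m : Fin (N + 1), m ≤ i → ∀ l : ℤ, cellIndex P l = m →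
        Function.invFun (f (kv i)) (f (kv m) (v 0 l)) ≤ B) → v n j ≤ B by
    intro i j hij n B hB
    exact key n i j hij B hB
  intro n
  induction n with
  | zero =>
    intro i j hij B hB
    have h := hB i le_rfl j hij
    rwa [hleftinv] at h
  | succ n ih =>
    suffices h : ∀ M : ℕ, ∀ i : Fin (N + 1), (i : ℕ) < M → ∀ j : ℤ, cellIndex P j = i →
        ∀ B : ℝ, (∀ m : Fin (N + 1), m ≤ i → ∀ l : ℤ, cellIndex P l = m →
          Function.invFun (f (kv i)) (f (kv m) (v 0 l)) ≤ B) → v (n + 1) j ≤ B by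
      intro i j hij B hB
      exact h (N + 1) i i.isLt j hij B hB
    intro M
    induction M with
    | zero => intro i hi; exact absurd hi (by omega)
    | succ M ihM =>
      intro i hiM j hij B hB
      by_cases hintf : ∃ i₀ : Fin N, P i₀ = j
      · obtain ⟨i₀, hi₀⟩ := hintf
        subst hi₀
        have hisucc : i = i₀.succ := by rw [← hij, cellIndex_interface P hP i₀]
        have hw_region : cellIndex P (P i₀ - 1) = i₀.castSucc :=
          cellIndex_interface_pred P hP i₀
        set C := Function.invFun (f (kv i₀.castSucc)) (f (kv i) B) with hC
        have hles : i₀.castSucc ≤ i := by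
          rw [hisucc]; exact Fin.castSucc_lt_succ.le
        have hCbound : ∀ m : Fin (N + 1), m ≤ i₀.castSucc → ∀ l : ℤ, cellIndex P l = m →
            Function.invFun (f (kv i₀.castSucc)) (f (kv m) (v 0 l)) ≤ C := by
          intro m hm l hl
          have h1 := hB m (le_trans hm hles) l hl
          have h2 : f (kv m) (v 0 l) ≤ f (kv i) B := by
            have h3 := (hsm (kv i)).monotone h1
            rwa [hright] at h3
          have h4 : f (kv i₀.castSucc) (Function.invFun (f (kv i₀.castSucc)) (f (kv m) (v 0 l)))
              ≤ f (kv i₀.castSucc) C := by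
            rw [hC, hright, hright]; exact h2
          exact ((hsm (kv i₀.castSucc)).le_iff_le).mp h4
        have hvalM : ((i₀.castSucc : Fin (N + 1)) : ℕ) < M := by
          have h1 : (i : ℕ) = (i₀ : ℕ) + 1 := by rw [hisucc]; simp
          simp only [Fin.coe_castSucc]
          omega
        have hwC : v (n + 1) (P i₀ - 1) ≤ C := ihM i₀.castSucc hvalM _ hw_region C hCbound
        have hIface : f (kv i) (v (n + 1) (P i₀)) = f (kv i₀.castSucc) (v (n + 1) (P i₀ - 1)) := by
          rw [hisucc]; exact hscheme.interface n i₀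
        have hfinal : f (kv i) (v (n + 1) (P i₀)) ≤ f (kv i) B := by
          rw [hIface]
          calc f (kv i₀.castSucc) (v (n + 1) (P i₀ - 1))
              ≤ f (kv i₀.castSucc) C := (hsm _).monotone hwC
            _ = f (kv i) B := by rw [hC, hright]
        exact ((hsm (kv i)).le_iff_le).mp hfinal
      · push_neg at hintf
        have hupd := hscheme.interior n j (fun i' => (hintf i').symm)
        have hleftcell : cellIndex P (j - 1) = i := by
          rw [cellIndex_sub_one P j hintf, hij]
        have h1 := ih i j hij B hB
        have h2 := ih i (j - 1) hleftcell B hB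
        rw [hupd, hij]
        have m1 := hGm i h1
        simp only at m1
        have m2 : (Δt / Δx) * f (kv i) (v n (j - 1)) ≤ (Δt / Δx) * f (kv i) B :=
          mul_le_mul_of_nonneg_left ((hsm _).monotone h2) hlam0
        linarith
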